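/- Let M be a connected topological space and let Ψ₂ : M → ℂ and Φ₀₂, Φ₁₁ : M → ℝ be continuous functions. Suppose that the three functions x ↦ 6·Ψ₂(x)², x ↦ 2·Φ₀₂(x)² + 4·Φ₁₁(x)², and x ↦ −6·Φ₀₂(x)²·Φ₁₁(x) are each constant on M. Then Ψ₂, Φ₀₂ and Φ₁₁ are each constant on M. -/
import Mathlib

open Polynomial

lemma const_of_finite_range {X α : Type*} [TopologicalSpace X] [PreconnectedSpace X]
    [TopologicalSpace α] [T1Space α] {f : X → α} (hf : Continuous f) {S : Set α}
    (hS : S.Finite) (h : ∀ x, f x ∈ S) : ∀ x y, f x = f y := by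
  intro x y
  have hset : f ⁻¹' {f x} = (f ⁻¹' (S \ {f x}))ᶜ := by
    ext z
    have := h z
    simp only [Set.mem_preimage, Set.mem_singleton_iff, Set.mem_compl_iff, Set.mem_diff]
    tauto
  have hclopen : IsClopen (f ⁻¹' {f x}) := by
    refine ⟨IsClosed.preimage hf isClosed_singleton, ?_⟩
    rw [hset]
    exact (IsClosed.preimage hf ((hS.subset Set.diff_subset).isClosed)).isOpen_compl
  have := hclopen.eq_univ ⟨x, rfl⟩
  have hy : y ∈ f ⁻¹' {f x} := this ▸ Set.mem_univ y
  exact hy.symm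

lemma const_of_poly {X K : Type*} [TopologicalSpace X] [PreconnectedSpace X]
    [Field K] [TopologicalSpace K] [T1Space K] {f : X → K} (hf : Continuous f)
    {p : K[X]} (hp : p ≠ 0) (h : ∀ x, p.eval (f x) = 0) : ∀ x y, f x = f y :=
  const_of_finite_range hf (Polynomial.finite_setOf_isRoot hp) h

/-- If the zeroth order invariants `6Ψ₂²`, `2Φ₀₂² + 4Φ₁₁²` and `−6Φ₀₂²Φ₁₁` are constant
on a connected spacetime, then the curvature scalars `Ψ₂`, `Φ₀₂`, `Φ₁₁` are constant. -/
theorem curvature_scalars_constant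
    (M : Type*) [TopologicalSpace M] [ConnectedSpace M]
    (Ψ₂ : M → ℂ) (Φ₀₂ Φ₁₁ : M → ℝ)
    (hΨ₂ : Continuous Ψ₂) (hΦ₀₂ : Continuous Φ₀₂) (hΦ₁₁ : Continuous Φ₁₁)
    (w₁ : ℂ) (r₁ r₂ : ℝ)
    (hw₁ : ∀ x, 6 * (Ψ₂ x) ^ 2 = w₁)
    (hr₁ : ∀ x, 2 * (Φ₀₂ x) ^ 2 + 4 * (Φ₁₁ x) ^ 2 = r₁)
    (hr₂ : ∀ x, -6 * (Φ₀₂ x) ^ 2 * (Φ₁₁ x) = r₂) :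
    (∀ x y, Ψ₂ x = Ψ₂ y) ∧ (∀ x y, Φ₀₂ x = Φ₀₂ y) ∧ (∀ x y, Φ₁₁ x = Φ₁₁ y) := by
  have hΨ : ∀ x y, Ψ₂ x = Ψ₂ y := by
    refine const_of_poly hΨ₂ (p := C 6 * X ^ 2 - C w₁) ?_ ?_
    · intro hcontra
      have : (C 6 * X ^ 2 - C w₁ : ℂ[X]).coeff 2 = 0 := by rw [hcontra]; simp
      simp [coeff_C] at this
    · intro x
      simp [hw₁ x]
  have hΦ : ∀ x y, Φ₁₁ x = Φ₁₁ y := by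
    refine const_of_poly hΦ₁₁ (p := C 12 * X ^ 3 - C (3 * r₁) * X - C r₂) ?_ ?_
    · intro hcontra
      have : (C 12 * X ^ 3 - C (3 * r₁) * X - C r₂ : ℝ[X]).coeff 3 = 0 := by
        rw [hcontra]; simp
      simp [coeff_C] at this
    · intro x
      have h1 := hr₁ x
      have h2 := hr₂ x
      simp only [eval_sub, eval_mul, eval_C, eval_pow, eval_X]
      linear_combination 3 * Φ₁₁ x * h1 + h2
  refine ⟨hΨ, ?_, hΦ⟩
  obtain ⟨x₀⟩ : Nonempty M := inferInstance
  have hk : ∀ x, (Φ₀₂ x) ^ 2 = (Φ₀₂ x₀) ^ 2 := by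
    intro x
    have h1 := hr₁ x
    have h2 := hr₁ x₀
    have h3 := hΦ x x₀
    linear_combination (h1 - h2) / 2 - 2 * (Φ₁₁ x + Φ₁₁ x₀) * h3
  refine const_of_poly hΦ₀₂ (p := X ^ 2 - C ((Φ₀₂ x₀) ^ 2)) ?_ ?_
  · exact X_pow_sub_C_ne_zero (by norm_num) _
  · intro x
    simp [hk x]
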